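/- arXiv:2411.17737 — 2 statements merged into one kernel-verified Lean document; each statement's English description precedes it below -/
import Mathlib

section
/- Let r ≥ 2 be an integer. Then the determinant of the walk matrix W(M_1) of the matrix M_1 equals 2^{r−1}. -/
open Matrix BigOperators

/-- The divisor-type matrix `M₁`: tridiagonal with diagonal `(1, 2, ..., 2, 3)`
and off-diagonal entries `1` (0-based indexing). -/
def M1 (r : ℕ) : Matrix (Fin r) (Fin r) ℤ :=
  Matrix.of fun i j =>
    if i = j then (if (i : ℕ) = 0 then 1 else if (i : ℕ) = r - 1 then 3 else 2)
    else if (i : ℕ) + 1 = (j : ℕ) ∨ (j : ℕ) + 1 = (i : ℕ) then 1 else 0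

/-- The walk matrix of a square matrix `M`: its `j`-th column is `M^j · e` (0-based `j`). -/
def walkMatrix {r : ℕ} (M : Matrix (Fin r) (Fin r) ℤ) : Matrix (Fin r) (Fin r) ℤ :=
  Matrix.of fun i j => (M ^ (j : ℕ)).mulVec (fun _ => 1) i

-- helper sum lemma
lemma sum_coe_ite {r : ℕ} (c : ℕ) (v : Fin r → ℤ) :
    (∑ j : Fin r, if (j : ℕ) = c then v j else 0) = if h : c < r then v ⟨c, h⟩ else 0 := by
  split_ifs with h
  · rw [Finset.sum_eq_single (⟨c, h⟩ : Fin r)]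
    · simp
    · intro j _ hj
      rw [if_neg]
      simpa [Fin.ext_iff] using hj
    · simp
  · apply Finset.sum_eq_zero
    intro j _
    rw [if_neg]
    have := j.isLt
    omega

lemma M1_mulVec {r : ℕ} (v : Fin r → ℤ) (i : Fin r) :
    (M1 r *ᵥ v) i =
      (if (i : ℕ) = 0 then 1 else if (i : ℕ) = r - 1 then 3 else 2) * v i
      + (if h : (i : ℕ) + 1 < r then v ⟨(i : ℕ) + 1, h⟩ else 0)
      + (if h : 0 < (i : ℕ) then v ⟨(i : ℕ) - 1, by omega⟩ else 0) := by
  have hiv := i.isLt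
  have key : ∀ j : Fin r, M1 r i j * v j =
      (if (j : ℕ) = (i : ℕ) then (if (i : ℕ) = 0 then 1 else if (i : ℕ) = r - 1 then 3 else 2) * v j else 0)
      + (if (j : ℕ) = (i : ℕ) + 1 then v j else 0)
      + (if (j : ℕ) = (i : ℕ) - 1 ∧ 0 < (i : ℕ) then v j else 0) := by
    intro j
    have hjv := j.isLt
    simp only [M1, Matrix.of_apply, Fin.ext_iff]
    split_ifs <;> first | (exfalso; omega) | ring1
  rw [Matrix.mulVec, dotProduct]
  rw [Finset.sum_congr rfl (fun j _ => key j), Finset.sum_add_distrib, Finset.sum_add_distrib]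
  congr 1
  · congr 1
    · rw [sum_coe_ite]
      simp [hiv]
    · rw [sum_coe_ite]
  · by_cases hi : 0 < (i : ℕ)
    · have : ∀ j : Fin r, (if (j : ℕ) = (i : ℕ) - 1 ∧ 0 < (i : ℕ) then v j else 0)
          = (if (j : ℕ) = (i : ℕ) - 1 then v j else 0) := by
        intro j; simp [hi]
      rw [Finset.sum_congr rfl (fun j _ => this j), sum_coe_ite]
      rw [dif_pos (by omega : (i:ℕ) - 1 < r), dif_pos hi]
    · rw [dif_neg hi]
      apply Finset.sum_eq_zero
      intro j _
      rw [if_neg (by omega)]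

def delta0 (r : ℕ) : Fin r → ℤ := fun i => if (i : ℕ) = 0 then 1 else 0

lemma w_spec (r : ℕ) (n : ℕ) :
    (∀ i : Fin r, n < (i : ℕ) → ((M1 r ^ n) *ᵥ delta0 r) i = 0) ∧
    (∀ i : Fin r, (i : ℕ) = n → ((M1 r ^ n) *ᵥ delta0 r) i = 1) := by
  induction n with
  | zero =>
    simp only [pow_zero, Matrix.one_mulVec, delta0]
    constructor
    · intro i hi; rw [if_neg (by omega)]
    · intro i hi; rw [if_pos hi]
  | succ n ih =>
    obtain ⟨ih0, ih1⟩ := ih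
    have hrec : ∀ i : Fin r, ((M1 r ^ (n+1)) *ᵥ delta0 r) i = (M1 r *ᵥ ((M1 r ^ n) *ᵥ delta0 r)) i := by
      intro i
      rw [Matrix.mulVec_mulVec, ← pow_succ']
    constructor
    · intro i hi
      rw [hrec, M1_mulVec]
      rw [ih0 i (by omega)]
      have h2 : ∀ h : (i:ℕ) + 1 < r, ((M1 r ^ n) *ᵥ delta0 r) ⟨(i:ℕ)+1, h⟩ = 0 := by
        intro h; exact ih0 _ (by simp; omega)
      have h3 : ∀ h : 0 < (i:ℕ), ((M1 r ^ n) *ᵥ delta0 r) ⟨(i:ℕ)-1, by omega⟩ = 0 := by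
        intro h; exact ih0 _ (by simp; omega)
      have e2 : (if h : (i:ℕ)+1 < r then ((M1 r ^ n) *ᵥ delta0 r) ⟨(i:ℕ)+1, h⟩ else 0) = 0 := by
        split_ifs with h
        exacts [h2 h, rfl]
      have h0i : 0 < (i:ℕ) := by omega
      rw [e2, dif_pos h0i, h3 h0i]
      ring
    · intro i hi
      rw [hrec, M1_mulVec]
      rw [ih0 i (by omega)]
      have h0i : 0 < (i : ℕ) := by omega
      have h3 : ((M1 r ^ n) *ᵥ delta0 r) ⟨(i:ℕ)-1, by omega⟩ = 1 := by
        apply ih1; simp; omega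
      have h2 : ∀ h : (i:ℕ) + 1 < r, ((M1 r ^ n) *ᵥ delta0 r) ⟨(i:ℕ)+1, h⟩ = 0 := by
        intro h; exact ih0 _ (by simp; omega)
      have e2 : (if h : (i:ℕ)+1 < r then ((M1 r ^ n) *ᵥ delta0 r) ⟨(i:ℕ)+1, h⟩ else 0) = 0 := by
        split_ifs with h
        exacts [h2 h, rfl]
      rw [dif_pos h0i, h3, e2]
      ring

lemma rowsum (r : ℕ) (hr : 2 ≤ r) (i : Fin r) :
    (M1 r *ᵥ (fun _ => (1:ℤ))) i = 4 - 2 * delta0 r i := by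
  have hiv := i.isLt
  rw [M1_mulVec]
  simp only [delta0]
  split_ifs <;> omega

lemma v_rec (r : ℕ) (hr : 2 ≤ r) (n : ℕ) (i : Fin r) :
    ((M1 r ^ (n+1)) *ᵥ (fun _ => (1:ℤ))) i
      = 4 * ((M1 r ^ n) *ᵥ (fun _ => (1:ℤ))) i - 2 * ((M1 r ^ n) *ᵥ delta0 r) i := by
  have h1 : ((M1 r ^ (n+1)) *ᵥ (fun _ => (1:ℤ))) = (M1 r ^ n) *ᵥ (M1 r *ᵥ (fun _ => (1:ℤ))) := by
    rw [Matrix.mulVec_mulVec, ← pow_succ]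
  rw [h1]
  have h2 : (M1 r *ᵥ (fun _ => (1:ℤ))) = (fun j => 4 * (fun _ => (1:ℤ)) j - 2 * delta0 r j) := by
    funext j; rw [rowsum r hr]; ring
  rw [h2]
  have h3 : (fun j => 4 * (fun _ => (1:ℤ)) j - 2 * delta0 r j)
      = (4 : ℤ) • (fun _ => (1:ℤ)) - (2:ℤ) • delta0 r := by
    funext j; simp [smul_eq_mul]
  rw [h3, Matrix.mulVec_sub, Matrix.mulVec_smul, Matrix.mulVec_smul]
  simp [smul_eq_mul]

lemma sum_succ_coe_ite {r : ℕ} (c : ℕ) (v : Fin r → ℤ) :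
    (∑ j : Fin r, if (j : ℕ) + 1 = c then v j else 0)
      = if h : 0 < c ∧ c - 1 < r then v ⟨c - 1, h.2⟩ else 0 := by
  by_cases hc : 0 < c
  · have : ∀ j : Fin r, (if (j : ℕ) + 1 = c then v j else 0)
        = (if (j : ℕ) = c - 1 then v j else 0) := by
      intro j
      congr 1
      simp only [eq_iff_iff]
      omega
    rw [Finset.sum_congr rfl (fun j _ => this j), sum_coe_ite]
    split_ifs with h1 h2 h2 <;> first | rfl | omega
  · rw [dif_neg (by omega)]
    apply Finset.sum_eq_zero
    intro j _
    rw [if_neg (by omega)]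


/-- `det W(M₁) = 2^(r-1)`. -/
theorem det_walkMatrix_M1 (r : ℕ) (hr : 2 ≤ r) :
    (walkMatrix (M1 r)).det = 2 ^ (r - 1) := by
  obtain ⟨m, rfl⟩ : ∃ m, r = m + 1 := ⟨r - 1, by omega⟩
  have hm : 1 ≤ m := by omega
  set W := walkMatrix (M1 (m+1)) with hW
  set U : Matrix (Fin (m+1)) (Fin (m+1)) ℤ :=
    Matrix.of (fun i j => (if (i:ℕ) = (j:ℕ) then 1 else 0) + (if (i:ℕ)+1 = (j:ℕ) then -4 else 0))
    with hU
  set B : Matrix (Fin (m+1)) (Fin (m+1)) ℤ :=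
    Matrix.of (fun i j => if (j:ℕ) = 0 then 1 else ((M1 (m+1) ^ ((j:ℕ)-1)) *ᵥ delta0 (m+1)) i)
    with hB
  set d : Fin (m+1) → ℤ := fun j => if (j:ℕ) = 0 then 1 else -2 with hd
  -- Step 1 : W * U = B * diagonal d
  have hWU : W * U = B * Matrix.diagonal d := by
    ext i j
    rw [Matrix.mul_apply, Matrix.mul_diagonal]
    have key : ∀ k : Fin (m+1), W i k * U k j =
        (if (k:ℕ) = (j:ℕ) then W i k else 0) + (if (k:ℕ)+1 = (j:ℕ) then W i k * (-4) else 0) := by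
      intro k
      simp only [hU, Matrix.of_apply, mul_add]
      congr 1 <;> split_ifs <;> ring
    rw [Finset.sum_congr rfl (fun k _ => key k), Finset.sum_add_distrib,
      sum_coe_ite, sum_succ_coe_ite, dif_pos j.isLt]
    have hWval : ∀ k : Fin (m+1), W i k = ((M1 (m+1) ^ (k:ℕ)) *ᵥ (fun _ => (1:ℤ))) i := fun k => rfl
    by_cases hj : (j:ℕ) = 0
    · rw [dif_neg (by omega)]
      simp only [hB, hd, Matrix.of_apply, hj, if_pos]
      rw [hWval]
      show ((M1 (m+1) ^ (0:ℕ)) *ᵥ (fun _ => (1:ℤ))) i + 0 = 1 * 1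
      simp [Matrix.one_mulVec]
    · rw [dif_pos (by have := j.isLt; omega : 0 < (j:ℕ) ∧ (j:ℕ) - 1 < m + 1)]
      have : (⟨(j:ℕ), j.isLt⟩ : Fin (m+1)) = j := rfl
      rw [this]
      simp only [hB, hd, Matrix.of_apply, if_neg hj]
      have hrw : W i j = ((M1 (m+1) ^ (((j:ℕ)-1)+1)) *ᵥ (fun _ => (1:ℤ))) i := by
        rw [hWval j]
        congr 2
        omega
      have hval2 : W i ⟨(j:ℕ)-1, by omega⟩ = ((M1 (m+1) ^ ((j:ℕ)-1)) *ᵥ (fun _ => (1:ℤ))) i := rfl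
      rw [hrw, hval2, v_rec (m+1) (by omega)]
      ring
  -- Step 2 : det U = 1
  have hdetU : U.det = 1 := by
    rw [Matrix.det_of_upperTriangular]
    · apply Finset.prod_eq_one
      intro i _
      simp [hU]
    · intro i j hji
      have hji' : (j:ℕ) < (i:ℕ) := hji
      simp only [hU, Matrix.of_apply]
      rw [if_neg (by omega), if_neg (by omega)]
      ring
  -- Step 3 : det (diagonal d) = (-2)^m
  have hdetD : (Matrix.diagonal d).det = (-2)^m := by
    rw [Matrix.det_diagonal, Fin.prod_univ_succ]
    have h0 : d 0 = 1 := by simp [hd]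
    have hs : ∀ i : Fin m, d i.succ = -2 := by
      intro i
      simp only [hd]
      rw [if_neg (by simp [Fin.val_succ])]
    rw [h0, Finset.prod_congr rfl (fun i _ => hs i)]
    simp
  -- Step 4 : det B = (-1)^m
  have hdetB : B.det = (-1)^m := by
    set σ := finRotate (m+1) with hσ
    have hC : (B.submatrix id σ).det = 1 := by
      rw [Matrix.det_of_upperTriangular]
      · apply Finset.prod_eq_one
        intro i _
        simp only [Matrix.submatrix_apply, id_eq, hσ, finRotate_succ_apply, hB, Matrix.of_apply]
        rw [Fin.val_add_one]
        by_cases hi : i = Fin.last m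
        · rw [if_pos hi, if_pos rfl]
        · rw [if_neg hi, if_neg (by omega)]
          simp only [Nat.add_sub_cancel]
          exact (w_spec (m+1) (i:ℕ)).2 i rfl
      · intro i j hji
        have hji' : (j:ℕ) < (i:ℕ) := hji
        have hjl : j ≠ Fin.last m := by
          intro h
          have : (j:ℕ) = m := by rw [h]; rfl
          have := i.isLt
          omega
        simp only [Matrix.submatrix_apply, id_eq, hσ, finRotate_succ_apply, hB, Matrix.of_apply]
        rw [Fin.val_add_one, if_neg hjl, if_neg (by omega)]
        simp only [Nat.add_sub_cancel]
        exact (w_spec (m+1) (j:ℕ)).1 i hji'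
    rw [Matrix.det_permute' σ B, hσ, sign_finRotate] at hC
    push_cast at hC
    have h2 : ((-1:ℤ)^m) * ((-1:ℤ)^m * B.det) = ((-1:ℤ)^m) * 1 := by rw [hC]
    rwa [← mul_assoc, ← pow_add, ← two_mul, pow_mul, neg_one_sq, one_pow, one_mul, mul_one] at h2
  -- Conclusion
  have := congrArg Matrix.det hWU
  rw [Matrix.det_mul, Matrix.det_mul, hdetU, hdetB, hdetD, mul_one] at this
  rw [this]
  have : ((-1:ℤ)^m) * (-2:ℤ)^m = ((-1) * (-2))^m := by rw [mul_pow]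
  rw [this]
  norm_num
end

section
/- Let r ≥ 2 be an integer. Then the determinant of the r×r real matrix whose k-th column is v_k (for k = 1,...,r) equals (−1)^{⌊r/2⌋} · ∏_{1 ≤ j < i ≤ r} (λ_i − λ_j). -/
open Matrix Real BigOperators

noncomputable section

/-- `α_k = (2k - 1)π / (2r)`. -/
def alphaA (r k : ℕ) : ℝ := (2 * (k : ℝ) - 1) * Real.pi / (2 * (r : ℝ))

/-- `λ_k = 2 - 2 cos α_k`. -/
def lambdaA (r k : ℕ) : ℝ := 2 - 2 * Real.cos (alphaA r k)

/-- The vector `v_k` whose `j`-th entry (1-based `j`) is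
`(-1)^(r-j) * (1 + ∑_{i=1}^{r-j} 2 cos(i α_k))`; here 0-based indexing. -/
def vvec (r k : ℕ) : Fin r → ℝ :=
  fun j => (-1 : ℝ) ^ (r - 1 - (j : ℕ)) *
    (1 + ∑ i ∈ Finset.Icc 1 (r - 1 - (j : ℕ)), 2 * Real.cos ((i : ℝ) * alphaA r k))

/-!
Up to the sign `(-1)^(r-1-j)`, the `j`-th entry of `v_k` is the Dirichlet kernel
`D_m(θ) = 1 + ∑_{i=1}^m 2 cos(iθ)` at `θ = α_k`, `m = r - 1 - j`. The three-term recurrence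
`D_{m+2} = 2 cos θ · D_{m+1} - D_m` makes `(-1)^m D_m(θ)` a monic polynomial `q_m` of degree `m`
in `λ = 2 - 2 cos θ`. So the matrix is, with its rows reversed, the transpose of `(q_i(λ_k))`,
whose determinant is the Vandermonde determinant of the `λ_k`; reversing `r` rows costs
the sign `(-1)^(r choose 2) = (-1)^⌊r/2⌋`.
-/

open Equiv Finset

theorem neg_one_pow_choose_two {M : Type*} [Monoid M] [HasDistribNeg M] :
    ∀ n : ℕ, (-1 : M) ^ n.choose 2 = (-1) ^ (n / 2)
  | 0 => by simp
  | 1 => by simp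
  | n + 2 => by
    have hchoose : (n + 2).choose 2 = n.choose 2 + 2 * n + 1 := by
      simp only [Nat.choose_succ_succ, Nat.choose_one_right, Nat.choose_zero_right]; ring
    rw [hchoose, Nat.add_div_right n two_pos, pow_succ, pow_add, pow_mul,
      neg_one_pow_choose_two n]
    simp [pow_succ]

theorem Fin.sign_revPerm (n : ℕ) : Perm.sign (Fin.revPerm : Perm (Fin n)) = (-1) ^ (n / 2) := by
  have hinv (i : Fin n) :
      ∏ j ∈ Ioi i, (if i.rev < j.rev then 1 else -1 : ℤˣ) = (-1) ^ (n - 1 - i) := by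
    rw [prod_congr rfl fun j hj => if_neg (by simpa using (mem_Ioi.mp hj).le),
      Finset.prod_const, Fin.card_Ioi]
  rw [Perm.sign_eq_prod_prod_Ioi]
  simp only [Fin.revPerm_apply, hinv, prod_pow_eq_pow_sum, ← neg_one_pow_choose_two n]
  rw [Fin.sum_univ_eq_sum_range (fun i => n - 1 - i), sum_range_reflect (fun i => i) n,
    sum_range_id, Nat.choose_two_right]

theorem Finset.prod_filter_lt_eq_prod_prod_Ioi {ι M : Type*} [Fintype ι] [LinearOrder ι]
    [LocallyFiniteOrderTop ι] [CommMonoid M] (f : ι → ι → M) :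
    ∏ p ∈ univ.filter (fun p : ι × ι => p.1 < p.2), f p.1 p.2 = ∏ i, ∏ j ∈ Ioi i, f i j := by
  rw [prod_filter, ← univ_product_univ, prod_product]
  refine prod_congr rfl fun i _ => ?_
  rw [← prod_filter]
  congr 1
  ext j
  simp

def dirichletKernel (θ : ℝ) (m : ℕ) : ℝ := 1 + ∑ i ∈ Finset.Icc 1 m, 2 * Real.cos (i * θ)

lemma dirichletKernel_zero (θ : ℝ) : dirichletKernel θ 0 = 1 := by
  simp [dirichletKernel]

lemma dirichletKernel_succ (θ : ℝ) (m : ℕ) :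
    dirichletKernel θ (m + 1) = dirichletKernel θ m + 2 * Real.cos ((m + 1) * θ) := by
  rw [dirichletKernel, Finset.sum_Icc_succ_top (by omega), dirichletKernel]
  push_cast; ring

lemma dirichletKernel_add_two (θ : ℝ) (m : ℕ) :
    dirichletKernel θ (m + 2) =
      2 * Real.cos θ * dirichletKernel θ (m + 1) - dirichletKernel θ m := by
  induction m with
  | zero =>
    norm_num [dirichletKernel_succ, dirichletKernel_zero, one_add_one_eq_two, cos_two_mul]
    ring
  | succ k ih =>
    have hcos : cos ((k + 3) * θ) + cos ((k + 1) * θ) = 2 * cos θ * cos ((k + 2) * θ) := by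
      rw [show (k + 3) * θ = (k + 2) * θ + θ by ring, show (k + 1) * θ = (k + 2) * θ - θ by ring,
        cos_add, cos_sub]; ring
    have h₃ := dirichletKernel_succ θ (k + 2)
    have h₂ := dirichletKernel_succ θ (k + 1)
    have h₁ := dirichletKernel_succ θ k
    push_cast at h₁ h₂ h₃ ⊢
    ring_nf at h₁ h₂ h₃ hcos ih ⊢
    linear_combination h₃ + ih - 2 * cos θ * h₂ + h₁ + 2 * hcos

section Polynomial

open Polynomial

variable (R : Type*) [CommRing R]

def dirichletKernelPoly : ℕ → R[X]
  | 0 => 1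
  | 1 => X - C 3
  | m + 2 => (X - C 2) * dirichletKernelPoly (m + 1) - dirichletKernelPoly m

variable {R}

lemma dirichletKernelPoly_monic_natDegree [Nontrivial R] :
    ∀ m, (dirichletKernelPoly R m).Monic ∧ (dirichletKernelPoly R m).natDegree = m
  | 0 => ⟨monic_one, natDegree_one⟩
  | 1 => ⟨monic_X_sub_C 3, natDegree_X_sub_C 3⟩
  | m + 2 => by
    obtain ⟨hmonic₁, hdeg₁⟩ := dirichletKernelPoly_monic_natDegree (m + 1)
    obtain ⟨-, hdeg₀⟩ := dirichletKernelPoly_monic_natDegree m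
    have hmonic : ((X - C 2) * dirichletKernelPoly R (m + 1)).Monic :=
      (monic_X_sub_C 2).mul hmonic₁
    have hdeg : ((X - C 2) * dirichletKernelPoly R (m + 1)).natDegree = m + 2 := by
      rw [(monic_X_sub_C 2).natDegree_mul hmonic₁, natDegree_X_sub_C, hdeg₁, add_comm]
    have hlt : (dirichletKernelPoly R m).natDegree <
        ((X - C 2) * dirichletKernelPoly R (m + 1)).natDegree := by
      omega
    exact ⟨hmonic.sub_of_left (degree_lt_degree hlt),
      (natDegree_sub_eq_left_of_natDegree_lt hlt).trans hdeg⟩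

lemma dirichletKernelPoly_eval (θ : ℝ) :
    ∀ m, (dirichletKernelPoly ℝ m).eval (2 - 2 * Real.cos θ) = (-1) ^ m * dirichletKernel θ m
  | 0 => by simp [dirichletKernelPoly, dirichletKernel_zero]
  | 1 => by
    simp [dirichletKernelPoly, dirichletKernel_succ, dirichletKernel_zero]; ring
  | m + 2 => by
    simp only [dirichletKernelPoly, eval_sub, eval_mul, eval_X, eval_C,
      dirichletKernelPoly_eval θ (m + 1), dirichletKernelPoly_eval θ m, dirichletKernel_add_two]
    ring

end Polynomial

lemma vvec_apply_eq_eval (r k : ℕ) (j : Fin r) :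
    vvec r k j = (dirichletKernelPoly ℝ j.rev).eval (lambdaA r k) := by
  rw [lambdaA, dirichletKernelPoly_eval, Fin.val_rev, vvec, dirichletKernel, Nat.sub_sub,
    add_comm 1]

theorem det_vvec_matrix_general (r : ℕ) :
    (Matrix.of (fun (j k : Fin r) => vvec r ((k : ℕ) + 1) j)).det =
      (-1 : ℝ) ^ (r / 2) *
        ∏ p ∈ Finset.univ.filter (fun p : Fin r × Fin r => p.1 < p.2),
          (lambdaA r ((p.2 : ℕ) + 1) - lambdaA r ((p.1 : ℕ) + 1)) := by
  set lam : Fin r → ℝ := fun k => lambdaA r (k + 1)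
  have hrows : Matrix.of (fun (j k : Fin r) => vvec r ((k : ℕ) + 1) j) =
      (Matrix.of fun (k i : Fin r) => (dirichletKernelPoly ℝ i).eval (lam k))ᵀ.submatrix
        Fin.revPerm id := by
    ext j k
    simp [vvec_apply_eq_eval, lam]
  rw [hrows, det_permute, Fin.sign_revPerm, det_transpose,
    ← det_eval_matrixOfPolynomials_eq_det_vandermonde lam _
      (fun i => (dirichletKernelPoly_monic_natDegree i).2)
      (fun i => (dirichletKernelPoly_monic_natDegree i).1),
    det_vandermonde, prod_filter_lt_eq_prod_prod_Ioi fun i j => lam j - lam i]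
  push_cast
  rfl

/-- The determinant of the matrix whose `k`-th column is `v_k` equals
`(-1)^⌊r/2⌋ · ∏_{j < i} (λ_i - λ_j)`. -/
theorem det_vvec_matrix (r : ℕ) (hr : 2 ≤ r) :
    (Matrix.of (fun (j k : Fin r) => vvec r ((k : ℕ) + 1) j)).det =
      (-1 : ℝ) ^ (r / 2) *
        ∏ p ∈ Finset.univ.filter (fun p : Fin r × Fin r => p.1 < p.2),
          (lambdaA r ((p.2 : ℕ) + 1) - lambdaA r ((p.1 : ℕ) + 1)) :=
  det_vvec_matrix_general r
end
end
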